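/- For any Latin square $L$ of order $n \geq 2$, the number $\nu(L)$ of conjugates of $L$ (counted over the six conjugates indexed by permutations of the coordinates, with multiplicity) that are row-Hamiltonian is an even number; that is, $\nu(L) \in \{0, 2, 4, 6\}$. -/
import Mathlib


/-- A Latin square as a set of triples (row, column, symbol): any two coordinates
determine the third uniquely. -/
def IsLatinSet {α : Type*} (T : Set (Fin 3 → α)) : Prop :=
  ∀ i j : Fin 3, i ≠ j → ∀ a b : α, ∃! t, t ∈ T ∧ t i = a ∧ t j = b

/-- The `σ`-conjugate of a Latin square viewed as a set of triples. -/
def conjSq {α : Type*} (σ : Equiv.Perm (Fin 3)) (T : Set (Fin 3 → α)) : Set (Fin 3 → α) :=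
  {t | t ∘ σ ∈ T}

/-- `T'` is obtained from `T` by permuting rows, columns and symbols. -/
def IsotopicSet {α : Type*} (T T' : Set (Fin 3 → α)) : Prop :=
  ∃ f : Fin 3 → Equiv.Perm α, T' = (fun t i => f i (t i)) '' T

/-- `T` has a proper subrectangle: rows `R`, columns `C` with `1 < |R| ≤ |C| < n`
whose submatrix uses exactly `|C|` symbols (i.e. is a Latin rectangle). -/
def HasProperSubrectSet {α : Type*} [Fintype α] (T : Set (Fin 3 → α)) : Prop :=
  ∃ R C : Finset α, 1 < R.card ∧ R.card ≤ C.card ∧ C.card < Fintype.card α ∧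
    {c | ∃ t ∈ T, t 0 ∈ R ∧ t 1 ∈ C ∧ t 2 = c}.ncard = C.card

/-- A Latin square is row-Hamiltonian iff it has no proper subrectangle. -/
def RowHamSet {α : Type*} [Fintype α] (T : Set (Fin 3 → α)) : Prop := ¬ HasProperSubrectSet T

/-- `ν(T)`: the number of the six conjugates of `T` that are row-Hamiltonian. -/
noncomputable def nuSet {α : Type*} [Fintype α] (T : Set (Fin 3 → α)) : ℕ :=
  {σ : Equiv.Perm (Fin 3) | RowHamSet (conjSq σ T)}.ncard

/- ### Auxiliary lemmas -/

/-- A finite set closed under a fixed-point-free involution has even cardinality. -/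
lemma even_card_of_involution' {β : Type*} [DecidableEq β] (s : Finset β) (f : β → β)
    (hmem : ∀ a ∈ s, f a ∈ s) (hinv : ∀ a ∈ s, f (f a) = a) (hne : ∀ a ∈ s, f a ≠ a) :
    Even s.card := by
  induction s using Finset.strongInduction with
  | _ s ih =>
    rcases s.eq_empty_or_nonempty with rfl | ⟨a, ha⟩
    · simp
    · have hfa := hmem a ha
      have hane : a ∉ ({f a} : Finset β) := by simp [(hne a ha).symm]
      have hsub : ({a, f a} : Finset β) ⊆ s := by
        intro x hx; simp at hx; rcases hx with rfl | rfl <;> assumption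
      have hcard2 : ({a, f a} : Finset β).card = 2 := by
        rw [Finset.card_insert_of_notMem hane, Finset.card_singleton]
      set t := s \ {a, f a} with ht
      have htss : t ⊂ s := Finset.sdiff_ssubset hsub (by simp)
      have htmem : ∀ x ∈ t, f x ∈ t := by
        intro x hx
        rw [ht, Finset.mem_sdiff] at hx ⊢
        refine ⟨hmem x hx.1, ?_⟩
        intro hfx
        simp only [Finset.mem_insert, Finset.mem_singleton] at hfx
        rcases hfx with h | h
        · exact hx.2 (by simp [← h, hinv x hx.1])
        · have : x = a := by
            have := hinv x hx.1
            have h2 := hinv a ha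
            rw [h] at this; rw [h2] at this; exact this.symm
          exact hx.2 (by simp [this])
      have htinv : ∀ x ∈ t, f (f x) = x := fun x hx => hinv x (Finset.mem_sdiff.1 hx).1
      have htne : ∀ x ∈ t, f x ≠ x := fun x hx => hne x (Finset.mem_sdiff.1 hx).1
      have heven := ih t htss htmem htinv htne
      have hcard : s.card = t.card + 2 := by
        rw [ht, Finset.card_sdiff_of_subset hsub, hcard2]
        have : 2 ≤ s.card := hcard2 ▸ Finset.card_le_card hsub
        omega
      rw [hcard]
      exact heven.add (by decide)

lemma conj_conj {α : Type*} (σ τ : Equiv.Perm (Fin 3)) (T : Set (Fin 3 → α)) :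
    conjSq σ (conjSq τ T) = conjSq (σ * τ) T := by
  have e : ∀ t : Fin 3 → α, t ∘ ⇑(σ * τ) = (t ∘ σ) ∘ τ := by
    intro t; ext x; simp [Equiv.Perm.mul_apply]
  ext t; simp only [conjSq, Set.mem_setOf_eq, e]

lemma conjSq_one {α : Type*} (T : Set (Fin 3 → α)) : conjSq 1 T = T := by
  ext t; simp [conjSq]

lemma latin_conj {α : Type*} (σ : Equiv.Perm (Fin 3)) (T : Set (Fin 3 → α))
    (hT : IsLatinSet T) : IsLatinSet (conjSq σ T) := by
  intro i j hij a b
  obtain ⟨t, ⟨htT, hti, htj⟩, huniq⟩ :=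
    hT (σ.symm i) (σ.symm j) (fun h => hij (σ.symm.injective h)) a b
  refine ⟨t ∘ σ.symm, ⟨?_, hti, htj⟩, ?_⟩
  · show (t ∘ σ.symm) ∘ σ ∈ T
    convert htT using 1; ext x; simp
  · rintro u ⟨huT, hui, huj⟩
    have h1 : u ∘ σ = t := huniq (u ∘ σ)
      ⟨huT, by simpa using hui, by simpa using huj⟩
    ext x
    have : (u ∘ σ) (σ.symm x) = t (σ.symm x) := by rw [h1]
    simpa using this

/-- The swap of coordinates 1 and 2 (columns and symbols). -/
abbrev gswap : Equiv.Perm (Fin 3) := Equiv.swap 1 2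

/-- A proper subrectangle of a Latin square yields one in its (132)-conjugate. -/
lemma subrect_swap {α : Type*} [Fintype α] (U : Set (Fin 3 → α)) (hU : IsLatinSet U)
    (h : HasProperSubrectSet U) : HasProperSubrectSet (conjSq gswap U) := by
  classical
  obtain ⟨R, C, hR, hRC, hCn, hS⟩ := h
  set S : Set α := {c | ∃ t ∈ U, t 0 ∈ R ∧ t 1 ∈ C ∧ t 2 = c} with hSdef
  have hSfin : S.Finite := Set.toFinite S
  set Sf : Finset α := hSfin.toFinset with hSf
  have hSfcard : Sf.card = C.card := by
    rw [hSf, ← Set.ncard_eq_toFinset_card S hSfin, hS]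
  -- the triple through (r, c) in coordinates (0,1)
  have h01 := fun r c => hU 0 1 (by decide) r c
  have h02 := fun r s => hU 0 2 (by decide) r s
  -- for each r ∈ R, the row map c ↦ symbol is a bijection C → Sf
  have key : ∀ r ∈ R, ∀ s ∈ Sf, ∃ c ∈ C, ∃ t ∈ U, t 0 = r ∧ t 1 = c ∧ t 2 = s := by
    intro r hr
    set φ : α → α := fun c => ((h01 r c).exists.choose) 2 with hφ
    have hφspec : ∀ c, ((h01 r c).exists.choose) ∈ U ∧ ((h01 r c).exists.choose) 0 = r ∧
        ((h01 r c).exists.choose) 1 = c := fun c => (h01 r c).exists.choose_spec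
    have hinj : Set.InjOn φ ↑C := by
      intro c hc c' hc' hcc
      obtain ⟨hU1, h10, h11⟩ := hφspec c
      obtain ⟨hU2, h20, h21⟩ := hφspec c'
      have := (h02 r (φ c)).unique ⟨hU1, h10, rfl⟩ ⟨hU2, h20, hcc.symm⟩
      rw [← h11, ← h21, this]
    have himsub : Finset.image φ C ⊆ Sf := by
      intro s hs
      obtain ⟨c, hc, rfl⟩ := Finset.mem_image.1 hs
      obtain ⟨hU1, h10, h11⟩ := hφspec c
      simp only [hSf, Set.Finite.mem_toFinset]
      exact ⟨_, hU1, by rw [h10]; exact hr, by rw [h11]; exact hc, rfl⟩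
    have himcard : (Finset.image φ C).card = Sf.card := by
      rw [Finset.card_image_of_injOn hinj, hSfcard]
    have him : Finset.image φ C = Sf := Finset.eq_of_subset_of_card_le himsub (le_of_eq himcard.symm)
    intro s hs
    rw [← him] at hs
    obtain ⟨c, hc, rfl⟩ := Finset.mem_image.1 hs
    obtain ⟨hU1, h10, h11⟩ := hφspec c
    exact ⟨c, hc, _, hU1, h10, h11, rfl⟩
  -- the symbol set of the conjugate on R × Sf equals ↑C
  have hset : {c | ∃ t ∈ conjSq gswap U, t 0 ∈ R ∧ t 1 ∈ Sf ∧ t 2 = c} = (↑C : Set α) := by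
    ext c
    simp only [Set.mem_setOf_eq, Finset.coe_mem, Finset.mem_coe]
    constructor
    · rintro ⟨t, htU, ht0, ht1, rfl⟩
      have htU' : t ∘ gswap ∈ U := htU
      have e0 : (t ∘ gswap) 0 = t 0 := by
        show t (gswap 0) = t 0
        rw [show gswap 0 = 0 by decide]
      have e1 : (t ∘ gswap) 1 = t 2 := by
        show t (gswap 1) = t 2; rw [show gswap 1 = 2 by decide]
      have e2 : (t ∘ gswap) 2 = t 1 := by
        show t (gswap 2) = t 1; rw [show gswap 2 = 1 by decide]
      obtain ⟨c', hc', u, huU, hu0, hu1, hu2⟩ := key (t 0) ht0 (t 1) ht1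
      have := (h02 (t 0) (t 1)).unique ⟨htU', e0, by rw [e2]⟩
        ⟨huU, hu0, hu2⟩
      have : (t ∘ gswap) 1 = u 1 := by rw [this]
      rw [e1] at this
      rwa [this, hu1]
    · intro hc
      obtain ⟨r, hr⟩ : R.Nonempty := Finset.card_pos.1 (by omega)
      obtain ⟨hU1, h10, h11⟩ := (h01 r c).exists.choose_spec
      set t := (h01 r c).exists.choose
      have hts : t 2 ∈ Sf := by
        simp only [hSf, Set.Finite.mem_toFinset]
        exact ⟨t, hU1, by rw [h10]; exact hr, by rw [h11]; exact hc, rfl⟩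
      refine ⟨t ∘ gswap, ?_, ?_, ?_, ?_⟩
      · show (t ∘ gswap) ∘ gswap ∈ U
        convert hU1 using 1; ext x
        simp [Function.comp, Equiv.swap_apply_self]
      · show t (gswap 0) ∈ R
        rw [show gswap 0 = 0 by decide, h10]; exact hr
      · show t (gswap 1) ∈ Sf
        rw [show gswap 1 = 2 by decide]; exact hts
      · show t (gswap 2) = c
        rw [show gswap 2 = 1 by decide, h11]
  refine ⟨R, Sf, hR, hSfcard ▸ hRC, hSfcard ▸ hCn, ?_⟩
  rw [hset, Set.ncard_coe_finset, hSfcard]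

/-- Row-Hamiltonicity is preserved by the (132)-conjugation. -/
lemma rowham_swap {α : Type*} [Fintype α] (U : Set (Fin 3 → α)) (hU : IsLatinSet U) :
    RowHamSet (conjSq gswap U) ↔ RowHamSet U := by
  have hUU : conjSq gswap (conjSq gswap U) = U := by
    rw [conj_conj, Equiv.swap_mul_self, conjSq_one]
  constructor
  · intro h hsub
    exact h (subrect_swap U hU hsub)
  · intro h hsub
    have := subrect_swap (conjSq gswap U) (latin_conj _ _ hU) hsub
    rw [hUU] at this
    exact h this

/-- For any Latin square of order `n ≥ 2`, the number `ν(L)` of the six conjugates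
of `L` that are row-Hamiltonian lies in `{0, 2, 4, 6}`. -/
theorem stmt3 {n : ℕ} (hn : 2 ≤ n) (T : Set (Fin 3 → Fin n)) (hT : IsLatinSet T) :
    nuSet T ∈ ({0, 2, 4, 6} : Set ℕ) := by
  classical
  set P : Equiv.Perm (Fin 3) → Prop := fun σ => RowHamSet (conjSq σ T) with hP
  have hkey : ∀ σ, P (gswap * σ) ↔ P σ := by
    intro σ
    have : conjSq (gswap * σ) T = conjSq gswap (conjSq σ T) := (conj_conj _ _ _).symm
    rw [hP]
    simp only [this]
    exact rowham_swap (conjSq σ T) (latin_conj σ T hT)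
  set F : Finset (Equiv.Perm (Fin 3)) := Finset.univ.filter P with hF
  have hnu : nuSet T = F.card := by
    have : {σ : Equiv.Perm (Fin 3) | RowHamSet (conjSq σ T)} = ↑F := by
      ext σ; simp [hF, hP]
    rw [nuSet, this, Set.ncard_coe_finset]
  have heven : Even F.card := by
    apply even_card_of_involution' F (fun σ => gswap * σ)
    · intro σ hσ
      rw [hF, Finset.mem_filter] at hσ ⊢
      exact ⟨Finset.mem_univ _, (hkey σ).2 hσ.2⟩
    · intro σ _
      rw [← mul_assoc, Equiv.swap_mul_self, one_mul]
    · intro σ _ h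
      have : gswap = 1 := mul_right_cancel (by rw [h, one_mul])
      exact absurd this (by decide)
  have hle : F.card ≤ 6 := by
    have h1 : F.card ≤ Fintype.card (Equiv.Perm (Fin 3)) := Finset.card_le_univ F
    have h2 : Fintype.card (Equiv.Perm (Fin 3)) = 6 := by
      rw [Fintype.card_perm]; decide
    omega
  rw [hnu]
  obtain ⟨m, hm⟩ := heven
  simp only [Set.mem_insert_iff, Set.mem_singleton_iff]
  omega
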